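/- arXiv:1907.04906 — 3 statements merged into one kernel-verified Lean document; each statement's English description precedes it below -/
import Mathlib

section
/- A directed cycle of length n admits an almost-disjoint 2-path decomposition if and only if n is even and n ≠ 4, and in that case (for n ≥ 6 even) it admits exactly two such decompositions. -/
namespace Digraph

variable {V : Type*} [DecidableEq V]

/-- The vertex set of a set of arcs. -/
def dpVerts (P : Finset (V × V)) : Set V := {v | ∃ p ∈ P, v = p.1 ∨ v = p.2}

/-- `P` is a directed path of length 2: arcs `(a,b)`, `(b,c)` with `a`, `b`, `c` distinct. -/
def IsDTwoPath (P : Finset (V × V)) : Prop :=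
  ∃ a b c : V, a ≠ b ∧ b ≠ c ∧ a ≠ c ∧ P = {(a, b), (b, c)}

/-- Two directed 2-paths are in conflict if their vertex sets share at least two vertices. -/
def DConflict (P Q : Finset (V × V)) : Prop :=
  ∃ u v : V, u ≠ v ∧ u ∈ dpVerts P ∧ u ∈ dpVerts Q ∧ v ∈ dpVerts P ∧ v ∈ dpVerts Q

/-- An almost-disjoint 2-path decomposition of the digraph with arc set `A`: a partition of
`A` into directed 2-paths, no two of which are in conflict. -/
def IsDDecomp (A : Set (V × V)) (X : Set (Finset (V × V))) : Prop :=
  (∀ P ∈ X, IsDTwoPath P) ∧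
  (∀ p : V × V, p ∈ A ↔ ∃ P ∈ X, p ∈ P) ∧
  (∀ P ∈ X, ∀ Q ∈ X, P ≠ Q → ∀ p ∈ P, p ∉ Q) ∧
  (∀ P ∈ X, ∀ Q ∈ X, P ≠ Q → ¬ DConflict P Q)

end Digraph

open Digraph

/-- The arc set of the directed cycle of length `n` on vertex set `ZMod n`. -/
def cycleArcs (n : ℕ) : Set (ZMod n × ZMod n) := {p | p.2 = p.1 + 1}

/-! ### Auxiliary machinery -/

/-- The 2-path starting at `a` inside the cycle. -/
def Ppath (n : ℕ) (a : ZMod n) : Finset (ZMod n × ZMod n) := {(a, a + 1), (a + 1, a + 2)}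

/-- The candidate decomposition consisting of the 2-paths starting at points of parity `r`. -/
def Xpar (n : ℕ) (r : ℕ) : Set (Finset (ZMod n × ZMod n)) :=
  {P | ∃ a : ZMod n, a.val % 2 = r ∧ P = Ppath n a}

lemma castinj {n : ℕ} (hn : 3 ≤ n) {i j : ℕ} (hi : i < n) (hj : j < n)
    (h : (i : ZMod n) = (j : ZMod n)) : i = j := by
  haveI : NeZero n := ⟨by omega⟩
  have h2 := congrArg ZMod.val h
  rwa [ZMod.val_cast_of_lt hi, ZMod.val_cast_of_lt hj] at h2

lemma cyc_one_ne_zero {n : ℕ} (hn : 3 ≤ n) : (1 : ZMod n) ≠ 0 := by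
  intro h
  have h' : ((1 : ℕ) : ZMod n) = ((0 : ℕ) : ZMod n) := by push_cast; simpa using h
  have := castinj hn (by omega) (by omega) h'
  omega

lemma cyc_two_ne_zero {n : ℕ} (hn : 3 ≤ n) : (2 : ZMod n) ≠ 0 := by
  intro h
  have h' : ((2 : ℕ) : ZMod n) = ((0 : ℕ) : ZMod n) := by push_cast; simpa using h
  have := castinj hn (by omega) (by omega) h'
  omega

lemma mem_dpVerts_Ppath {n : ℕ} (a v : ZMod n) :
    v ∈ dpVerts (Ppath n a) ↔ v = a ∨ v = a + 1 ∨ v = a + 2 := by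
  show (∃ p ∈ Ppath n a, v = p.1 ∨ v = p.2) ↔ _
  constructor
  · rintro ⟨p, hp, hv⟩
    simp only [Ppath, Finset.mem_insert, Finset.mem_singleton] at hp
    rcases hp with rfl | rfl <;> simp only [] at hv <;> tauto
  · rintro (rfl | rfl | rfl)
    · exact ⟨(v, v + 1), by simp [Ppath], Or.inl rfl⟩
    · refine ⟨(a, a + 1), by simp [Ppath], Or.inr rfl⟩
    · refine ⟨(a + 1, a + 2), by simp [Ppath], Or.inr rfl⟩

lemma isDTwoPath_Ppath {n : ℕ} (hn : 3 ≤ n) (a : ZMod n) : IsDTwoPath (Ppath n a) := by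
  refine ⟨a, a + 1, a + 2, ?_, ?_, ?_, rfl⟩
  · exact fun h => cyc_one_ne_zero hn (by linear_combination -h)
  · exact fun h => cyc_one_ne_zero hn (by linear_combination -h)
  · exact fun h => cyc_two_ne_zero hn (by linear_combination -h)

lemma Ppath_inj {n : ℕ} (hn : 3 ≤ n) {a b : ZMod n} (h : Ppath n a = Ppath n b) : a = b := by
  have h1 : ((a, a + 1) : ZMod n × ZMod n) ∈ Ppath n b := by rw [← h]; simp [Ppath]
  have h2 : ((a + 1, a + 2) : ZMod n × ZMod n) ∈ Ppath n b := by rw [← h]; simp [Ppath]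
  simp only [Ppath, Finset.mem_insert, Finset.mem_singleton, Prod.mk.injEq] at h1 h2
  rcases h1 with ⟨rfl, -⟩ | ⟨hab, -⟩
  · rfl
  · exfalso
    rcases h2 with ⟨h3, -⟩ | ⟨h3, -⟩
    · exact cyc_two_ne_zero hn (by linear_combination h3 - hab)
    · exact cyc_one_ne_zero hn (by linear_combination h3 - hab)

lemma Ppath_subset_cycle {n : ℕ} (a : ZMod n) : ∀ p ∈ Ppath n a, p ∈ cycleArcs n := by
  intro p hp
  simp only [Ppath, Finset.mem_insert, Finset.mem_singleton] at hp
  rcases hp with rfl | rfl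
  · simp [cycleArcs]
  · simp only [cycleArcs, Set.mem_setOf_eq]
    ring

lemma val_add_nat {n : ℕ} (hn : 3 ≤ n) (a : ZMod n) {i : ℕ} (hi : i < n) :
    (a + (i : ℕ)).val = (a.val + i) % n := by
  haveI : NeZero n := ⟨by omega⟩
  rw [ZMod.val_add, ZMod.val_cast_of_lt hi]

lemma parity_eq {n : ℕ} (hn : 3 ≤ n) (h2 : 2 ∣ n) {a b : ZMod n} {i j : ℕ}
    (hi : i < n) (hj : j < n) (h : a + (i : ℕ) = b + (j : ℕ)) :
    (a.val + i) % 2 = (b.val + j) % 2 := by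
  have hv := congrArg ZMod.val h
  rw [val_add_nat hn _ hi, val_add_nat hn _ hj] at hv
  have h1 := congrArg (· % 2) hv
  simpa [Nat.mod_mod_of_dvd _ h2] using h1

lemma val_succ_parity {n : ℕ} (hn : 3 ≤ n) (h2 : 2 ∣ n) (b : ZMod n) :
    (b + 1).val % 2 = (b.val + 1) % 2 := by
  have hone : ((1 : ℕ) : ZMod n) = (1 : ZMod n) := by push_cast; ring
  rw [← hone, val_add_nat hn b (by omega), Nat.mod_mod_of_dvd _ h2]

lemma vert_index {n : ℕ} {a v : ZMod n} (h : v ∈ dpVerts (Ppath n a)) :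
    ∃ i : ℕ, i ≤ 2 ∧ v = a + (i : ℕ) := by
  rw [mem_dpVerts_Ppath] at h
  rcases h with rfl | rfl | rfl
  · exact ⟨0, by omega, by push_cast; ring⟩
  · exact ⟨1, by omega, by push_cast; ring⟩
  · exact ⟨2, by omega, by push_cast; ring⟩

/-- Existence: for even `n ≥ 6`, each parity class gives a decomposition. -/
lemma decomp_Xpar {n : ℕ} (hn : 6 ≤ n) (h2 : 2 ∣ n) {r : ℕ} (hr : r < 2) :
    IsDDecomp (cycleArcs n) (Xpar n r) := by
  haveI : NeZero n := ⟨by omega⟩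
  have hn3 : 3 ≤ n := by omega
  refine ⟨?_, ?_, ?_, ?_⟩
  · rintro P ⟨a, -, rfl⟩
    exact isDTwoPath_Ppath hn3 a
  · rintro ⟨x, y⟩
    constructor
    · intro hp
      simp only [cycleArcs, Set.mem_setOf_eq] at hp
      subst hp
      by_cases hx : x.val % 2 = r
      · exact ⟨Ppath n x, ⟨x, hx, rfl⟩, by simp [Ppath]⟩
      · refine ⟨Ppath n (x - 1), ⟨x - 1, ?_, rfl⟩, ?_⟩
        · have hv := val_succ_parity hn3 h2 (x - 1)
          rw [sub_add_cancel] at hv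
          omega
        · simp only [Ppath, Finset.mem_insert, Finset.mem_singleton, Prod.mk.injEq]
          right
          exact ⟨by ring, by ring⟩
    · rintro ⟨P, ⟨a, -, rfl⟩, hp⟩
      exact Ppath_subset_cycle a _ hp
  · rintro P ⟨a, ha, rfl⟩ Q ⟨b, hb, rfl⟩ hPQ p hpP hpQ
    simp only [Ppath, Finset.mem_insert, Finset.mem_singleton] at hpP hpQ
    have hab : a ≠ b := fun h => hPQ (by rw [h])
    rcases hpP with rfl | rfl <;> rcases hpQ with h | h <;>
      rw [Prod.mk.injEq] at h
    · exact hab h.1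
    · -- a = b + 1
      obtain ⟨h1, -⟩ := h
      have := val_succ_parity hn3 h2 b
      rw [← h1] at this
      omega
    · -- a + 1 = b
      obtain ⟨h1, -⟩ := h
      have := val_succ_parity hn3 h2 a
      rw [h1] at this
      omega
    · obtain ⟨h1, -⟩ := h
      exact hab (by linear_combination h1)
  · rintro P ⟨a, ha, rfl⟩ Q ⟨b, hb, rfl⟩ hPQ ⟨u, v, huv, hu1, hu2, hv1, hv2⟩
    have hab : a ≠ b := fun h => hPQ (by rw [h])
    obtain ⟨i, hi, hui⟩ := vert_index hu1
    obtain ⟨j, hj, huj⟩ := vert_index hu2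
    obtain ⟨k, hk, hvk⟩ := vert_index hv1
    obtain ⟨l, hl, hvl⟩ := vert_index hv2
    have hu : a + (i : ℕ) = b + (j : ℕ) := by rw [← hui, ← huj]
    have hv : a + (k : ℕ) = b + (l : ℕ) := by rw [← hvk, ← hvl]
    have hik : i ≠ k := by
      rintro rfl
      exact huv (by rw [hui, hvk])
    have hij : i ≠ j := by
      rintro rfl
      exact hab (by exact add_right_cancel hu)
    have hkl : k ≠ l := by
      rintro rfl
      exact hab (by exact add_right_cancel hv)
    have hsum : i + l = k + j := by
      have hz : a + ((i + l : ℕ) : ZMod n) = a + ((k + j : ℕ) : ZMod n) := by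
        push_cast
        have e1 : a + (i : ℕ) + (l : ℕ) = b + (j : ℕ) + (l : ℕ) := by rw [hu]
        have e2 : a + (k : ℕ) + (j : ℕ) = b + (l : ℕ) + (j : ℕ) := by rw [hv]
        calc a + ((i : ZMod n) + l) = a + (i : ℕ) + (l : ℕ) := by push_cast; ring
          _ = b + (j : ℕ) + (l : ℕ) := e1
          _ = b + (l : ℕ) + (j : ℕ) := by ring
          _ = a + (k : ℕ) + (j : ℕ) := e2.symm
          _ = a + ((k : ZMod n) + j) := by push_cast; ring
      exact castinj hn3 (by omega) (by omega) (add_left_cancel hz)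
    have hp1 := parity_eq hn3 h2 (by omega : i < n) (by omega : j < n) hu
    have hp2 := parity_eq hn3 h2 (by omega : k < n) (by omega : l < n) hv
    omega

/-- Uniqueness/structure: any decomposition forces `n` even, `n ≠ 4`, and is a parity class. -/
lemma unique_decomp {n : ℕ} (hn : 3 ≤ n) {X : Set (Finset (ZMod n × ZMod n))}
    (hX : IsDDecomp (cycleArcs n) X) :
    (2 ∣ n ∧ n ≠ 4) ∧ ∃ r < 2, X = Xpar n r := by
  classical
  haveI : NeZero n := ⟨by omega⟩
  -- every member of X is a Ppath
  have shape : ∀ P ∈ X, ∃ a : ZMod n, P = Ppath n a := by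
    intro P hP
    obtain ⟨a, b, c, hab, hbc, hac, rfl⟩ := hX.1 P hP
    have h1 : ((a, b) : ZMod n × ZMod n) ∈ cycleArcs n :=
      (hX.2.1 _).2 ⟨_, hP, by simp⟩
    have h2 : ((b, c) : ZMod n × ZMod n) ∈ cycleArcs n :=
      (hX.2.1 _).2 ⟨_, hP, by simp⟩
    simp only [cycleArcs, Set.mem_setOf_eq] at h1 h2
    refine ⟨a, ?_⟩
    subst h2; subst h1
    simp only [Ppath]
    have : a + 1 + 1 = a + 2 := by ring
    rw [this]
  have cover : ∀ x : ZMod n, Ppath n x ∈ X ∨ Ppath n (x - 1) ∈ X := by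
    intro x
    have hx : ((x, x + 1) : ZMod n × ZMod n) ∈ cycleArcs n := by simp [cycleArcs]
    obtain ⟨P, hP, hpP⟩ := (hX.2.1 _).1 hx
    obtain ⟨a, rfl⟩ := shape P hP
    simp only [Ppath, Finset.mem_insert, Finset.mem_singleton, Prod.mk.injEq] at hpP
    rcases hpP with ⟨rfl, -⟩ | ⟨h, -⟩
    · exact Or.inl hP
    · right
      have : a = x - 1 := by rw [h]; ring
      rwa [← this]
  have disj : ∀ x : ZMod n, ¬ (Ppath n x ∈ X ∧ Ppath n (x - 1) ∈ X) := by
    rintro x ⟨h1, h2⟩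
    have hne : Ppath n x ≠ Ppath n (x - 1) := by
      intro h
      have hx := Ppath_inj hn h
      apply cyc_one_ne_zero hn
      linear_combination hx
    refine hX.2.2.1 _ h1 _ h2 hne ((x, x + 1)) (by simp [Ppath]) ?_
    simp only [Ppath, Finset.mem_insert, Finset.mem_singleton, Prod.mk.injEq]
    right
    exact ⟨by ring, by ring⟩
  have alt : ∀ x : ZMod n, Ppath n (x + 1) ∈ X ↔ Ppath n x ∉ X := by
    intro x
    have hc := cover (x + 1)
    have hd := disj (x + 1)
    rw [add_sub_cancel_right] at hc hd
    tauto
  have step : ∀ (m : ℕ) (x : ZMod n),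
      (Ppath n (x + (m : ℕ)) ∈ X ↔ (m % 2 = 0 ↔ Ppath n x ∈ X)) := by
    intro m
    induction m with
    | zero => intro x; simp
    | succ m ih =>
      intro x
      have h1 : x + ((m + 1 : ℕ) : ZMod n) = (x + (m : ℕ)) + 1 := by push_cast; ring
      rw [h1, alt (x + (m : ℕ)), ih x]
      have h2 : ((m + 1) % 2 = 0) ↔ ¬ (m % 2 = 0) := by omega
      rw [h2]
      tauto
  have h2 : 2 ∣ n := by
    by_contra hodd
    have hf : ¬ (n % 2 = 0) := by omega
    have h0 := step n 0
    rw [ZMod.natCast_self, add_zero] at h0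
    tauto
  have hn4 : n ≠ 4 := by
    rintro rfl
    obtain ⟨a, ha⟩ : ∃ a : ZMod 4, Ppath 4 a ∈ X := by
      rcases cover 0 with h | h
      exacts [⟨_, h⟩, ⟨_, h⟩]
    have ha2 : Ppath 4 (a + 2) ∈ X := by
      have hs := (step 2 a).mpr (by simpa using ha)
      have hcast : a + ((2 : ℕ) : ZMod 4) = a + 2 := by push_cast; ring
      rwa [hcast] at hs
    have h20 : (2 : ZMod 4) ≠ 0 := by decide
    have hne : Ppath 4 a ≠ Ppath 4 (a + 2) := by
      intro h
      exact h20 (left_eq_add.mp (Ppath_inj (by norm_num) h))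
    have h40 : (4 : ZMod 4) = 0 := by decide
    refine hX.2.2.2 _ ha _ ha2 hne ⟨a, a + 2, ?_, ?_, ?_, ?_, ?_⟩
    · intro h
      exact h20 (left_eq_add.mp h)
    · rw [mem_dpVerts_Ppath]; left; rfl
    · rw [mem_dpVerts_Ppath]; right; right
      linear_combination -h40
    · rw [mem_dpVerts_Ppath]; right; right; rfl
    · rw [mem_dpVerts_Ppath]; left; rfl
  refine ⟨⟨h2, hn4⟩, ?_⟩
  have hchar : ∀ a : ZMod n,
      (Ppath n a ∈ X ↔ (a.val % 2 = 0 ↔ Ppath n (0 : ZMod n) ∈ X)) := by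
    intro a
    have hs := step a.val 0
    rwa [zero_add, ZMod.natCast_rightInverse a] at hs
  by_cases h0 : Ppath n (0 : ZMod n) ∈ X
  · refine ⟨0, by omega, ?_⟩
    ext P
    constructor
    · intro hP
      obtain ⟨a, rfl⟩ := shape P hP
      have := (hchar a).mp hP
      exact ⟨a, by tauto, rfl⟩
    · rintro ⟨a, har, rfl⟩
      exact (hchar a).mpr (by tauto)
  · refine ⟨1, by omega, ?_⟩
    ext P
    constructor
    · intro hP
      obtain ⟨a, rfl⟩ := shape P hP
      have hc := (hchar a).mp hP
      refine ⟨a, ?_, rfl⟩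
      have : ¬ (a.val % 2 = 0) := by tauto
      omega
    · rintro ⟨a, har, rfl⟩
      refine (hchar a).mpr ?_
      constructor
      · intro h; omega
      · intro h; exact absurd h h0

/-- A directed cycle of length `n ≥ 3` admits an almost-disjoint 2-path decomposition iff
`n` is even and `n ≠ 4`; moreover for even `n ≥ 6` there are exactly two such
decompositions. -/
theorem stmt4 (n : ℕ) (hn : 3 ≤ n) :
    ((∃ X : Set (Finset (ZMod n × ZMod n)), IsDDecomp (cycleArcs n) X) ↔
      (Even n ∧ n ≠ 4)) ∧
    (6 ≤ n → Even n →
      {X : Set (Finset (ZMod n × ZMod n)) | IsDDecomp (cycleArcs n) X}.ncard = 2) := by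
  haveI : NeZero n := ⟨by omega⟩
  constructor
  · constructor
    · rintro ⟨X, hX⟩
      obtain ⟨⟨h2, h4⟩, -⟩ := unique_decomp hn hX
      exact ⟨(even_iff_two_dvd).mpr h2, h4⟩
    · rintro ⟨he, h4⟩
      have h2 : 2 ∣ n := he.two_dvd
      have h6 : 6 ≤ n := by
        obtain ⟨k, rfl⟩ := he
        omega
      exact ⟨Xpar n 0, decomp_Xpar h6 h2 (by omega)⟩
  · intro h6 he
    have h2 : 2 ∣ n := he.two_dvd
    have hset : {X : Set (Finset (ZMod n × ZMod n)) | IsDDecomp (cycleArcs n) X}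
        = {Xpar n 0, Xpar n 1} := by
      ext X
      simp only [Set.mem_setOf_eq, Set.mem_insert_iff, Set.mem_singleton_iff]
      constructor
      · intro hX
        obtain ⟨-, r, hr, rfl⟩ := unique_decomp (by omega) hX
        rcases (by omega : r = 0 ∨ r = 1) with rfl | rfl
        · exact Or.inl rfl
        · exact Or.inr rfl
      · rintro (rfl | rfl)
        · exact decomp_Xpar h6 h2 (by omega)
        · exact decomp_Xpar h6 h2 (by omega)
    rw [hset]
    apply Set.ncard_pair
    intro h
    have h00 : Ppath n 0 ∈ Xpar n 0 := ⟨0, by simp [ZMod.val_zero], rfl⟩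
    rw [h] at h00
    obtain ⟨a, ha, hpe⟩ := h00
    have ha0 : (0 : ZMod n) = a := Ppath_inj (by omega) hpe
    rw [← ha0, ZMod.val_zero] at ha
    omega
end

section
/- If G is a forest, a path, or a cycle of length at least 5, then the conflict graph of G is claw-free. -/
namespace AD2PD

variable {V : Type*} [DecidableEq V]

/-- The vertex set of a set of edges. -/
def pathVerts (P : Finset (Sym2 V)) : Set V := {v | ∃ e ∈ P, v ∈ e}

/-- `P` is a path of length 2: two edges `{a,b}`, `{b,c}` with `a`, `b`, `c` distinct. -/
def IsTwoPath (P : Finset (Sym2 V)) : Prop :=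
  ∃ a b c : V, a ≠ b ∧ b ≠ c ∧ a ≠ c ∧ P = {s(a, b), s(b, c)}

/-- Two 2-paths are in conflict if their vertex sets share at least two vertices. -/
def Conflict (P Q : Finset (Sym2 V)) : Prop :=
  ∃ u v : V, u ≠ v ∧ u ∈ pathVerts P ∧ u ∈ pathVerts Q ∧ v ∈ pathVerts P ∧ v ∈ pathVerts Q

/-- An almost-disjoint 2-path decomposition of the graph `G`: a partition of the edge set
into 2-paths, no two of which are in conflict. -/
def IsAD2PD (G : SimpleGraph V) (X : Set (Finset (Sym2 V))) : Prop :=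
  (∀ P ∈ X, IsTwoPath P) ∧
  (∀ e : Sym2 V, e ∈ G.edgeSet ↔ ∃ P ∈ X, e ∈ P) ∧
  (∀ P ∈ X, ∀ Q ∈ X, P ≠ Q → ∀ e ∈ P, e ∉ Q) ∧
  (∀ P ∈ X, ∀ Q ∈ X, P ≠ Q → ¬ Conflict P Q)

/-! ### Auxiliary arithmetic lemmas -/

theorem finsub {n : ℕ} (hn : 5 ≤ n) (a b : Fin n) :
    (a - b).val = 1 ↔ (a.val = b.val + 1 ∨ a.val + n = b.val + 1) := by
  rw [Fin.sub_def]
  obtain ⟨A, ha⟩ := a; obtain ⟨B, hb⟩ := b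
  dsimp only
  rcases Nat.lt_or_ge (n - B + A) n with h | h
  · rw [Nat.mod_eq_of_lt h]
    constructor
    · intro h2; omega
    · rintro (h2 | h2) <;> omega
  · rw [Nat.mod_eq_sub_mod h, Nat.mod_eq_of_lt (show n - B + A - n < n by omega)]
    constructor
    · intro h2; omega
    · rintro (h2 | h2) <;> omega

theorem cyc_adj {n : ℕ} (hn : 5 ≤ n) {u v : Fin n}
    (h : (SimpleGraph.cycleGraph n).Adj u v) :
    u.val = v.val + 1 ∨ u.val + n = v.val + 1 ∨ v.val = u.val + 1 ∨ v.val + n = u.val + 1 := by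
  rw [SimpleGraph.cycleGraph_adj', finsub hn, finsub hn] at h
  tauto

theorem cyc_no_tri {n : ℕ} (hn : 5 ≤ n) {a b c : Fin n}
    (hab : a ≠ b) (hbc : b ≠ c) (hac : a ≠ c)
    (e1 : (SimpleGraph.cycleGraph n).Adj a b) (e2 : (SimpleGraph.cycleGraph n).Adj b c)
    (e3 : (SimpleGraph.cycleGraph n).Adj a c) : False := by
  have h1 := cyc_adj hn e1; have h2 := cyc_adj hn e2; have h3 := cyc_adj hn e3
  have d1 : a.val ≠ b.val := fun h => hab (Fin.ext h)
  have d2 : b.val ≠ c.val := fun h => hbc (Fin.ext h)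
  have d3 : a.val ≠ c.val := fun h => hac (Fin.ext h)
  have ha := a.isLt; have hb := b.isLt; have hc := c.isLt
  omega

theorem cyc_no_sq {n : ℕ} (hn : 5 ≤ n) {a b c d : Fin n}
    (hab : a ≠ b) (hbc : b ≠ c) (hcd : c ≠ d) (had : a ≠ d) (hac : a ≠ c) (hbd : b ≠ d)
    (e1 : (SimpleGraph.cycleGraph n).Adj a b) (e2 : (SimpleGraph.cycleGraph n).Adj b c)
    (e3 : (SimpleGraph.cycleGraph n).Adj c d) (e4 : (SimpleGraph.cycleGraph n).Adj d a) :
    False := by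
  have h1 := cyc_adj hn e1; have h2 := cyc_adj hn e2
  have h3 := cyc_adj hn e3; have h4 := cyc_adj hn e4
  have d1 : a.val ≠ b.val := fun h => hab (Fin.ext h)
  have d2 : b.val ≠ c.val := fun h => hbc (Fin.ext h)
  have d3 : c.val ≠ d.val := fun h => hcd (Fin.ext h)
  have d4 : a.val ≠ d.val := fun h => had (Fin.ext h)
  have d5 : a.val ≠ c.val := fun h => hac (Fin.ext h)
  have d6 : b.val ≠ d.val := fun h => hbd (Fin.ext h)
  have ha := a.isLt; have hb := b.isLt; have hc := c.isLt; have hd := d.isLt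
  omega

theorem path_no_tri {n : ℕ} {a b c : Fin n}
    (hab : a ≠ b) (hbc : b ≠ c) (hac : a ≠ c)
    (e1 : (SimpleGraph.pathGraph n).Adj a b) (e2 : (SimpleGraph.pathGraph n).Adj b c)
    (e3 : (SimpleGraph.pathGraph n).Adj a c) : False := by
  rw [SimpleGraph.pathGraph_adj] at e1 e2 e3
  have d1 : a.val ≠ b.val := fun h => hab (Fin.ext h)
  have d2 : b.val ≠ c.val := fun h => hbc (Fin.ext h)
  have d3 : a.val ≠ c.val := fun h => hac (Fin.ext h)
  omega

theorem path_no_sq {n : ℕ} {a b c d : Fin n}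
    (hab : a ≠ b) (hbc : b ≠ c) (hcd : c ≠ d) (had : a ≠ d) (hac : a ≠ c) (hbd : b ≠ d)
    (e1 : (SimpleGraph.pathGraph n).Adj a b) (e2 : (SimpleGraph.pathGraph n).Adj b c)
    (e3 : (SimpleGraph.pathGraph n).Adj c d) (e4 : (SimpleGraph.pathGraph n).Adj d a) :
    False := by
  rw [SimpleGraph.pathGraph_adj] at e1 e2 e3 e4
  have d1 : a.val ≠ b.val := fun h => hab (Fin.ext h)
  have d2 : b.val ≠ c.val := fun h => hbc (Fin.ext h)
  have d3 : c.val ≠ d.val := fun h => hcd (Fin.ext h)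
  have d4 : a.val ≠ d.val := fun h => had (Fin.ext h)
  have d5 : a.val ≠ c.val := fun h => hac (Fin.ext h)
  have d6 : b.val ≠ d.val := fun h => hbd (Fin.ext h)
  omega

theorem acyclic_no_tri {W : Type*} {G : SimpleGraph W} (hG : G.IsAcyclic) {a b c : W}
    (hab : a ≠ b) (hbc : b ≠ c) (hac : a ≠ c)
    (e1 : G.Adj a b) (e2 : G.Adj b c) (e3 : G.Adj a c) : False := by
  refine hG (SimpleGraph.Walk.cons e1 (SimpleGraph.Walk.cons e2
    (SimpleGraph.Walk.cons e3.symm SimpleGraph.Walk.nil))) ?_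
  rw [SimpleGraph.Walk.isCycle_def, SimpleGraph.Walk.isTrail_def]
  refine ⟨?_, by simp, ?_⟩
  · simp only [SimpleGraph.Walk.edges_cons, SimpleGraph.Walk.edges_nil, List.nodup_cons,
      List.mem_cons, List.not_mem_nil, or_false, List.nodup_nil, and_true, List.mem_singleton,
      Sym2.eq_iff]
    tauto
  · simp only [SimpleGraph.Walk.support_cons, SimpleGraph.Walk.support_nil, List.tail_cons,
      List.nodup_cons, List.mem_cons, List.not_mem_nil, or_false, List.nodup_nil, and_true,
      List.mem_singleton]
    tauto

theorem acyclic_no_sq {W : Type*} {G : SimpleGraph W} (hG : G.IsAcyclic) {a b c d : W}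
    (hab : a ≠ b) (hbc : b ≠ c) (hcd : c ≠ d) (had : a ≠ d) (hac : a ≠ c) (hbd : b ≠ d)
    (e1 : G.Adj a b) (e2 : G.Adj b c) (e3 : G.Adj c d) (e4 : G.Adj d a) : False := by
  refine hG (SimpleGraph.Walk.cons e1 (SimpleGraph.Walk.cons e2 (SimpleGraph.Walk.cons e3
    (SimpleGraph.Walk.cons e4 SimpleGraph.Walk.nil)))) ?_
  rw [SimpleGraph.Walk.isCycle_def, SimpleGraph.Walk.isTrail_def]
  refine ⟨?_, by simp, ?_⟩
  · simp only [SimpleGraph.Walk.edges_cons, SimpleGraph.Walk.edges_nil, List.nodup_cons,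
      List.mem_cons, List.not_mem_nil, or_false, List.nodup_nil, and_true, List.mem_singleton,
      Sym2.eq_iff]
    tauto
  · simp only [SimpleGraph.Walk.support_cons, SimpleGraph.Walk.support_nil, List.tail_cons,
      List.nodup_cons, List.mem_cons, List.not_mem_nil, or_false, List.nodup_nil, and_true,
      List.mem_singleton]
    tauto

/-- In a forest, a path or a long cycle there is no triangle. -/
theorem G_no_tri {G : SimpleGraph V}
    (hG : G.IsAcyclic ∨ (∃ n, Nonempty (G ≃g SimpleGraph.pathGraph n)) ∨
      (∃ n, 5 ≤ n ∧ Nonempty (G ≃g SimpleGraph.cycleGraph n)))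
    {a b c : V} (hab : a ≠ b) (hbc : b ≠ c) (hac : a ≠ c)
    (e1 : G.Adj a b) (e2 : G.Adj b c) (e3 : G.Adj a c) : False := by
  rcases hG with h | ⟨n, ⟨e⟩⟩ | ⟨n, hn, ⟨e⟩⟩
  · exact acyclic_no_tri h hab hbc hac e1 e2 e3
  · exact path_no_tri (fun h' => hab (e.toEquiv.injective h'))
      (fun h' => hbc (e.toEquiv.injective h')) (fun h' => hac (e.toEquiv.injective h'))
      (e.map_adj_iff.2 e1) (e.map_adj_iff.2 e2) (e.map_adj_iff.2 e3)
  · exact cyc_no_tri hn (fun h' => hab (e.toEquiv.injective h'))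
      (fun h' => hbc (e.toEquiv.injective h')) (fun h' => hac (e.toEquiv.injective h'))
      (e.map_adj_iff.2 e1) (e.map_adj_iff.2 e2) (e.map_adj_iff.2 e3)

/-- In a forest, a path or a long cycle there is no 4-cycle. -/
theorem G_no_sq {G : SimpleGraph V}
    (hG : G.IsAcyclic ∨ (∃ n, Nonempty (G ≃g SimpleGraph.pathGraph n)) ∨
      (∃ n, 5 ≤ n ∧ Nonempty (G ≃g SimpleGraph.cycleGraph n)))
    {a b c d : V}
    (hab : a ≠ b) (hbc : b ≠ c) (hcd : c ≠ d) (had : a ≠ d) (hac : a ≠ c) (hbd : b ≠ d)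
    (e1 : G.Adj a b) (e2 : G.Adj b c) (e3 : G.Adj c d) (e4 : G.Adj d a) : False := by
  rcases hG with h | ⟨n, ⟨e⟩⟩ | ⟨n, hn, ⟨e⟩⟩
  · exact acyclic_no_sq h hab hbc hcd had hac hbd e1 e2 e3 e4
  · exact path_no_sq (fun h' => hab (e.toEquiv.injective h'))
      (fun h' => hbc (e.toEquiv.injective h')) (fun h' => hcd (e.toEquiv.injective h'))
      (fun h' => had (e.toEquiv.injective h')) (fun h' => hac (e.toEquiv.injective h'))
      (fun h' => hbd (e.toEquiv.injective h'))
      (e.map_adj_iff.2 e1) (e.map_adj_iff.2 e2) (e.map_adj_iff.2 e3) (e.map_adj_iff.2 e4)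
  · exact cyc_no_sq hn (fun h' => hab (e.toEquiv.injective h'))
      (fun h' => hbc (e.toEquiv.injective h')) (fun h' => hcd (e.toEquiv.injective h'))
      (fun h' => had (e.toEquiv.injective h')) (fun h' => hac (e.toEquiv.injective h'))
      (fun h' => hbd (e.toEquiv.injective h'))
      (e.map_adj_iff.2 e1) (e.map_adj_iff.2 e2) (e.map_adj_iff.2 e3) (e.map_adj_iff.2 e4)

/-! ### Combinatorial core -/

lemma mem_pathVerts_pair {x y z v : V} :
    v ∈ pathVerts ({s(x, y), s(y, z)} : Finset (Sym2 V)) ↔ v = x ∨ v = y ∨ v = z := by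
  simp only [pathVerts, Set.mem_setOf_eq, Finset.mem_insert, Finset.mem_singleton]
  constructor
  · rintro ⟨e, (rfl | rfl), h⟩ <;> rw [Sym2.mem_iff] at h <;> tauto
  · intro h
    rcases h with rfl | rfl | rfl
    · exact ⟨s(v, y), Or.inl rfl, by simp⟩
    · exact ⟨s(x, v), Or.inl rfl, by simp⟩
    · exact ⟨s(y, v), Or.inr rfl, by simp⟩

lemma key {G : SimpleGraph V} {a b c : V} (hab : a ≠ b) (hbc : b ≠ c) (hac : a ≠ c)
    {T : Finset (Sym2 V)} (hT : IsTwoPath T) (hTE : (T : Set (Sym2 V)) ⊆ G.edgeSet)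
    (haT : a ∈ pathVerts T) (hcT : c ∈ pathVerts T) (hbT : b ∉ pathVerts T) :
    G.Adj a c ∨ ∃ y, y ≠ a ∧ y ≠ b ∧ y ≠ c ∧ G.Adj c y ∧ G.Adj y a := by
  obtain ⟨x, y, z, hxy, hyz, hxz, rfl⟩ := hT
  have E1 : G.Adj x y := G.mem_edgeSet.1 (hTE (by simp))
  have E2 : G.Adj y z := G.mem_edgeSet.1 (hTE (by simp))
  rw [mem_pathVerts_pair] at haT hcT hbT
  push_neg at hbT
  obtain ⟨hb1, hb2, hb3⟩ := hbT
  rcases haT with rfl | rfl | rfl <;> rcases hcT with rfl | rfl | rfl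
  · exact absurd rfl hac
  · exact Or.inl E1
  · exact Or.inr ⟨y, Ne.symm hxy, fun h => hb2 h.symm, hyz, E2.symm, E1.symm⟩
  · exact Or.inl E1.symm
  · exact absurd rfl hac
  · exact Or.inl E2
  · exact Or.inr ⟨y, hyz, fun h => hb2 h.symm, Ne.symm hxy, E1, E2⟩
  · exact Or.inl E2.symm
  · exact absurd rfl hac

lemma pair_of_conflict {a b c : V} {T : Finset (Sym2 V)}
    (h : Conflict ({s(a, b), s(b, c)} : Finset (Sym2 V)) T) :
    (a ∈ pathVerts T ∧ b ∈ pathVerts T) ∨ (b ∈ pathVerts T ∧ c ∈ pathVerts T) ∨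
    (a ∈ pathVerts T ∧ c ∈ pathVerts T) := by
  obtain ⟨u, v, huv, hu1, hu2, hv1, hv2⟩ := h
  rw [mem_pathVerts_pair] at hu1 hv1
  rcases hu1 with rfl | rfl | rfl <;> rcases hv1 with rfl | rfl | rfl <;> tauto

/-- If `G` is a forest, a path, or a cycle of length at least 5, then the conflict graph of `G`
is claw-free. -/
theorem stmt9 (G : SimpleGraph V)
    (hG : G.IsAcyclic ∨ (∃ n, Nonempty (G ≃g SimpleGraph.pathGraph n)) ∨
      (∃ n, 5 ≤ n ∧ Nonempty (G ≃g SimpleGraph.cycleGraph n))) :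
    ¬ ∃ P Q R S : Finset (Sym2 V),
      (IsTwoPath P ∧ (P : Set (Sym2 V)) ⊆ G.edgeSet) ∧
      (IsTwoPath Q ∧ (Q : Set (Sym2 V)) ⊆ G.edgeSet) ∧
      (IsTwoPath R ∧ (R : Set (Sym2 V)) ⊆ G.edgeSet) ∧
      (IsTwoPath S ∧ (S : Set (Sym2 V)) ⊆ G.edgeSet) ∧
      P ≠ Q ∧ P ≠ R ∧ P ≠ S ∧ Q ≠ R ∧ Q ≠ S ∧ R ≠ S ∧
      Conflict P Q ∧ Conflict P R ∧ Conflict P S ∧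
      ¬ Conflict Q R ∧ ¬ Conflict Q S ∧ ¬ Conflict R S := by
  rintro ⟨P, Q, R, S, ⟨hP, hPE⟩, ⟨hQ, hQE⟩, ⟨hR, hRE⟩, ⟨hS, hSE⟩,
    -, -, -, -, -, -, cPQ, cPR, cPS, nQR, nQS, nRS⟩
  obtain ⟨a, b, c, hab, hbc, hac, rfl⟩ := hP
  have e1 : G.Adj a b :=
    G.mem_edgeSet.1 (hPE (Finset.mem_coe.2 (Finset.mem_insert_self _ _)))
  have e2 : G.Adj b c :=
    G.mem_edgeSet.1 (hPE (Finset.mem_coe.2 (Finset.mem_insert_of_mem (Finset.mem_singleton_self _))))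
  have pQ := pair_of_conflict cPQ
  have pR := pair_of_conflict cPR
  have pS := pair_of_conflict cPS
  have good : ∃ T : Finset (Sym2 V), IsTwoPath T ∧ (T : Set (Sym2 V)) ⊆ G.edgeSet ∧
      a ∈ pathVerts T ∧ c ∈ pathVerts T ∧ b ∉ pathVerts T := by
    by_cases hbQ : b ∈ pathVerts Q
    · by_cases hbR : b ∈ pathVerts R
      · by_cases hbS : b ∈ pathVerts S
        · exfalso
          have aQ : a ∈ pathVerts Q ∨ c ∈ pathVerts Q := by
            rcases pQ with ⟨h, -⟩ | ⟨-, h⟩ | ⟨h, -⟩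
            exacts [Or.inl h, Or.inr h, Or.inl h]
          have aR : a ∈ pathVerts R ∨ c ∈ pathVerts R := by
            rcases pR with ⟨h, -⟩ | ⟨-, h⟩ | ⟨h, -⟩
            exacts [Or.inl h, Or.inr h, Or.inl h]
          have aS : a ∈ pathVerts S ∨ c ∈ pathVerts S := by
            rcases pS with ⟨h, -⟩ | ⟨-, h⟩ | ⟨h, -⟩
            exacts [Or.inl h, Or.inr h, Or.inl h]
          have hcb : c ≠ b := fun h => hbc h.symm
          rcases aQ with h1 | h1 <;> rcases aR with h2 | h2 <;> rcases aS with h3 | h3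
          · exact nQR ⟨a, b, hab, h1, h2, hbQ, hbR⟩
          · exact nQR ⟨a, b, hab, h1, h2, hbQ, hbR⟩
          · exact nQS ⟨a, b, hab, h1, h3, hbQ, hbS⟩
          · exact nRS ⟨c, b, hcb, h2, h3, hbR, hbS⟩
          · exact nRS ⟨a, b, hab, h2, h3, hbR, hbS⟩
          · exact nQS ⟨c, b, hcb, h1, h3, hbQ, hbS⟩
          · exact nQR ⟨c, b, hcb, h1, h2, hbQ, hbR⟩
          · exact nQR ⟨c, b, hcb, h1, h2, hbQ, hbR⟩
        · rcases pS with ⟨-, h⟩ | ⟨h, -⟩ | ⟨h1, h2⟩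
          · exact absurd h hbS
          · exact absurd h hbS
          · exact ⟨S, hS, hSE, h1, h2, hbS⟩
      · rcases pR with ⟨-, h⟩ | ⟨h, -⟩ | ⟨h1, h2⟩
        · exact absurd h hbR
        · exact absurd h hbR
        · exact ⟨R, hR, hRE, h1, h2, hbR⟩
    · rcases pQ with ⟨-, h⟩ | ⟨h, -⟩ | ⟨h1, h2⟩
      · exact absurd h hbQ
      · exact absurd h hbQ
      · exact ⟨Q, hQ, hQE, h1, h2, hbQ⟩
  obtain ⟨T, hT, hTE, haT, hcT, hbT⟩ := good
  rcases key hab hbc hac hT hTE haT hcT hbT with hAC | ⟨y, hy1, hy2, hy3, eCY, eYA⟩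
  · exact G_no_tri hG hab hbc hac e1 e2 hAC
  · exact G_no_sq hG hab hbc (Ne.symm hy3) (Ne.symm hy1) hac (Ne.symm hy2) e1 e2 eCY eYA

end AD2PD
end

section
/- Let D be obtained from two vertex-disjoint simple series-parallel digraphs D1 (source s1, sink t1) and D2 (source s2, sink t2) by parallel composition (identifying s1 with s2 to form s and t1 with t2 to form t), and assume D is simple. If X1 is an almost-disjoint 2-path decomposition of a subdigraph of D1 and X2 of a subdigraph of D2, both satisfying the feasibility conditions with configurations (a1,b1,c1) and (a2,b2,c2) respectively, and c1 = 0 or c2 = 0, then X1 ∪ X2 is an almost-disjoint 2-path decomposition of the corresponding subdigraph of D, witnessing the configuration (a1+a2, b1+b2, max(c1,c2)). -/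
namespace Digraph

variable {V : Type*} [DecidableEq V]

/-- The vertex set of an arc set. -/
def arcVerts (A : Set (V × V)) : Set V := {v | ∃ p ∈ A, v = p.1 ∨ v = p.2}

/-- `IsSP A s t`: the digraph with arc set `A` is a (simple) series-parallel digraph with
source `s` and sink `t`: it is a single arc, or arises from two smaller SP-digraphs on
otherwise disjoint vertex sets by a series or a parallel composition. -/
inductive IsSP : Set (V × V) → V → V → Prop
  | single {s t : V} (h : s ≠ t) : IsSP {(s, t)} s t
  | series {A₁ A₂ : Set (V × V)} {s m t : V} :
      IsSP A₁ s m → IsSP A₂ m t → arcVerts A₁ ∩ arcVerts A₂ = {m} →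
      Disjoint A₁ A₂ → IsSP (A₁ ∪ A₂) s t
  | parallel {A₁ A₂ : Set (V × V)} {s t : V} :
      IsSP A₁ s t → IsSP A₂ s t → arcVerts A₁ ∩ arcVerts A₂ = {s, t} →
      Disjoint A₁ A₂ → IsSP (A₁ ∪ A₂) s t

/-- `P` is a directed 2-path from `u` to `v`. -/
def IsUVPath (P : Finset (V × V)) (u v : V) : Prop := ∃ w : V, P = {(u, w), (w, v)}

/-- `S`, `T` and `X` witness that `(a,b,c)` is a feasible configuration for the digraph with
arc set `A`, source `s` and sink `t`:  `S` consists of out-arcs of `s`, `T` of in-arcs of `t`,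
`X` is an almost-disjoint 2-path decomposition of `A` minus `S ∪ T` with (i) `a = |S|`,
`b = |T|`; (ii) for no arc `(u,v) ∈ S ∪ T` there is a `u`-`v` path in `X`; (iii) `A` contains
the arc `(s,t)` iff `c = 1`, in which case `(s,t) ∈ S ∩ T`; (iv) `X` contains an `s`-`t` path
of length 2 iff `c = 2`. -/
def Witnesses (A : Set (V × V)) (s t : V) (a b c : ℕ)
    (S T : Set (V × V)) (X : Set (Finset (V × V))) : Prop :=
  c ≤ 2 ∧
  S ⊆ {p ∈ A | p.1 = s} ∧ T ⊆ {p ∈ A | p.2 = t} ∧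
  IsDDecomp (A \ (S ∪ T)) X ∧
  S.ncard = a ∧ T.ncard = b ∧
  (∀ p ∈ S ∪ T, ¬ ∃ P ∈ X, IsUVPath P p.1 p.2) ∧
  ((s, t) ∈ A ↔ c = 1) ∧
  (c = 1 → (s, t) ∈ S ∩ T) ∧
  ((∃ P ∈ X, IsUVPath P s t) ↔ c = 2)

/-- `(a,b,c)` is a `D`-feasible configuration for the digraph with arc set `A`, source `s`
and sink `t`. -/
def DFeasible (A : Set (V × V)) (s t : V) (a b c : ℕ) : Prop :=
  ∃ S T X, Witnesses A s t a b c S T X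

end Digraph

open Digraph

namespace Digraph

variable {V : Type*} [DecidableEq V]

set_option linter.unusedSectionVars false

lemma arcVerts_union (A B : Set (V × V)) :
    arcVerts (A ∪ B) = arcVerts A ∪ arcVerts B := by
  ext v; simp only [arcVerts, Set.mem_union, Set.mem_setOf_eq]; aesop

lemma IsSP.finite {A : Set (V × V)} {s t : V} (h : IsSP A s t) : A.Finite := by
  induction h with
  | single _ => exact Set.finite_singleton _
  | series _ _ _ _ ih1 ih2 => exact ih1.union ih2
  | parallel _ _ _ _ ih1 ih2 => exact ih1.union ih2

lemma IsSP.mem_arcVerts {A : Set (V × V)} {s t : V} (h : IsSP A s t) :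
    s ∈ arcVerts A ∧ t ∈ arcVerts A := by
  induction h with
  | single _ => exact ⟨⟨_, rfl, Or.inl rfl⟩, ⟨_, rfl, Or.inr rfl⟩⟩
  | series _ _ _ _ ih1 ih2 =>
      rw [arcVerts_union]; exact ⟨Or.inl ih1.1, Or.inr ih2.2⟩
  | parallel _ _ _ _ ih1 ih2 =>
      rw [arcVerts_union]; exact ⟨Or.inl ih1.1, Or.inr ih2.2⟩

lemma IsSP.source_sink_ne {A : Set (V × V)} {s t : V} (h : IsSP A s t) : s ≠ t := by
  induction h with
  | single h => exact h
  | @series A₁ A₂ s m t h1 h2 hm _ ih1 ih2 =>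
      intro hst
      have hs1 : s ∈ arcVerts A₁ := h1.mem_arcVerts.1
      have ht2 : t ∈ arcVerts A₂ := h2.mem_arcVerts.2
      have : s ∈ ({m} : Set V) := hm ▸ ⟨hs1, hst ▸ ht2⟩
      exact ih1 this
  | parallel _ _ _ _ ih1 _ => exact ih1

lemma IsSP.no_in_source {A : Set (V × V)} {s t : V} (h : IsSP A s t) :
    ∀ x, (x, s) ∉ A := by
  induction h with
  | single h => intro x hx; exact h (congrArg Prod.snd (Set.mem_singleton_iff.mp hx))
  | @series A₁ A₂ s m t h1 h2 hm _ ih1 ih2 =>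
      rintro x (hx | hx)
      · exact ih1 x hx
      · have hs2 : s ∈ arcVerts A₂ := ⟨_, hx, Or.inr rfl⟩
        have hs1 : s ∈ arcVerts A₁ := h1.mem_arcVerts.1
        have : s ∈ ({m} : Set V) := hm ▸ ⟨hs1, hs2⟩
        exact ih2 x (this ▸ hx)
  | parallel _ _ _ _ ih1 ih2 =>
      rintro x (hx | hx)
      · exact ih1 x hx
      · exact ih2 x hx

lemma IsSP.no_out_sink {A : Set (V × V)} {s t : V} (h : IsSP A s t) :
    ∀ x, (t, x) ∉ A := by
  induction h with
  | single h => intro x hx; cases Set.mem_singleton_iff.mp hx; exact h rfl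
  | @series A₁ A₂ s m t h1 h2 hm _ ih1 ih2 =>
      rintro x (hx | hx)
      · have ht1 : t ∈ arcVerts A₁ := ⟨_, hx, Or.inl rfl⟩
        have ht2 : t ∈ arcVerts A₂ := h2.mem_arcVerts.2
        have : t ∈ ({m} : Set V) := hm ▸ ⟨ht1, ht2⟩
        exact ih1 x (this ▸ hx)
      · exact ih2 x hx
  | parallel _ _ _ _ ih1 ih2 =>
      rintro x (hx | hx)
      · exact ih1 x hx
      · exact ih2 x hx

lemma IsSP.no_loop {A : Set (V × V)} {s t : V} (h : IsSP A s t) :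
    ∀ v, (v, v) ∉ A := by
  induction h with
  | single h => intro v hv; cases Set.mem_singleton_iff.mp hv; exact h rfl
  | series _ _ _ _ ih1 ih2 => rintro v (hv | hv); exacts [ih1 v hv, ih2 v hv]
  | parallel _ _ _ _ ih1 ih2 => rintro v (hv | hv); exacts [ih1 v hv, ih2 v hv]

/-- A 2-path inside an SP-digraph that contains both the source and the sink among its
vertices must be an `s`-`t` path. -/
lemma two_path_st {A : Set (V × V)} {s t : V} (hsp : IsSP A s t)
    {P : Finset (V × V)} (hP : IsDTwoPath P) (hPA : ∀ p ∈ P, p ∈ A)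
    (hs : s ∈ dpVerts P) (ht : t ∈ dpVerts P) : IsUVPath P s t := by
  obtain ⟨a, b, c, hab, hbc, hac, rfl⟩ := hP
  have h1 : (a, b) ∈ A := hPA _ (by simp)
  have h2 : (b, c) ∈ A := hPA _ (by simp)
  have hst := hsp.source_sink_ne
  simp only [dpVerts, Set.mem_setOf_eq, Finset.mem_insert, Finset.mem_singleton] at hs ht
  have hs' : s = a ∨ s = b ∨ s = c := by
    obtain ⟨p, hp | hp, h⟩ := hs <;> subst hp <;> tauto
  have ht' : t = a ∨ t = b ∨ t = c := by
    obtain ⟨p, hp | hp, h⟩ := ht <;> subst hp <;> tauto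
  have hsa : s = a := by
    rcases hs' with h | h | h
    · exact h
    · exact absurd h1 (h ▸ hsp.no_in_source a)
    · exact absurd h2 (h ▸ hsp.no_in_source b)
  have htc : t = c := by
    rcases ht' with h | h | h
    · exact absurd (hsa.trans h.symm) hst
    · exact absurd h2 (h ▸ hsp.no_out_sink c)
    · exact h
  exact ⟨b, by rw [hsa, htc]⟩

/-- An arc of `A₁` both of whose endpoints are vertices of `A₂` must be the arc `(s,t)`. -/
lemma cross_st {A₁ A₂ : Set (V × V)} {s t : V} (h₁ : IsSP A₁ s t) (h₂ : IsSP A₂ s t)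
    (hv : arcVerts A₁ ∩ arcVerts A₂ = {s, t})
    {p : V × V} (hp : p ∈ A₁) (h2a : p.1 ∈ arcVerts A₂) (h2b : p.2 ∈ arcVerts A₂) :
    p = (s, t) := by
  have h1a : p.1 ∈ arcVerts A₁ := ⟨p, hp, Or.inl rfl⟩
  have h1b : p.2 ∈ arcVerts A₁ := ⟨p, hp, Or.inr rfl⟩
  have ha : p.1 ∈ ({s, t} : Set V) := hv ▸ ⟨h1a, h2a⟩
  have hb : p.2 ∈ ({s, t} : Set V) := hv ▸ ⟨h1b, h2b⟩
  have hp' : (p.1, p.2) ∈ A₁ := hp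
  rcases ha with ha | ha <;> rcases hb with hb | hb
  · exact absurd (hb ▸ hp') (h₁.no_in_source p.1)
  · exact Prod.ext ha hb
  · exact absurd (ha ▸ hp') (h₁.no_out_sink p.2)
  · exact absurd (ha ▸ hp') (h₁.no_out_sink p.2)

end Digraph


/-- Sufficiency of the combination rule for parallel composition: if `(S1,T1,X1)` and
`(S2,T2,X2)` witness feasible configurations `(a1,b1,c1)` and `(a2,b2,c2)` for the two parts
of a simple parallel composition, and `c1 = 0` or `c2 = 0`, then `X1 ∪ X2` is an
almost-disjoint 2-path decomposition of the corresponding subdigraph of the composition,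
witnessing the configuration `(a1+a2, b1+b2, max c1 c2)`. -/
theorem stmt13 {V : Type*} [DecidableEq V] (A₁ A₂ : Set (V × V)) (s t : V)
    (h₁ : IsSP A₁ s t) (h₂ : IsSP A₂ s t)
    (hv : arcVerts A₁ ∩ arcVerts A₂ = {s, t}) (hd : Disjoint A₁ A₂)
    (a₁ b₁ c₁ a₂ b₂ c₂ : ℕ) (S₁ T₁ S₂ T₂ : Set (V × V))
    (X₁ X₂ : Set (Finset (V × V)))
    (w₁ : Witnesses A₁ s t a₁ b₁ c₁ S₁ T₁ X₁)
    (w₂ : Witnesses A₂ s t a₂ b₂ c₂ S₂ T₂ X₂)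
    (hc : c₁ = 0 ∨ c₂ = 0) :
    Witnesses (A₁ ∪ A₂) s t (a₁ + a₂) (b₁ + b₂) (max c₁ c₂)
      (S₁ ∪ S₂) (T₁ ∪ T₂) (X₁ ∪ X₂) := by
  obtain ⟨hc₁le, hS₁, hT₁, hX₁, ha₁, hb₁, hnp₁, hst₁, hSin₁, hpath₁⟩ := w₁
  obtain ⟨hc₂le, hS₂, hT₂, hX₂, ha₂, hb₂, hnp₂, hst₂, hSin₂, hpath₂⟩ := w₂
  obtain ⟨hX₁p, hX₁cov, hX₁dis, hX₁conf⟩ := hX₁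
  obtain ⟨hX₂p, hX₂cov, hX₂dis, hX₂conf⟩ := hX₂
  have hdis := Set.disjoint_left.mp hd
  have hmem₁ : ∀ P ∈ X₁, ∀ p ∈ P, p ∈ A₁ \ (S₁ ∪ T₁) :=
    fun P hP p hp => (hX₁cov p).2 ⟨P, hP, hp⟩
  have hmem₂ : ∀ P ∈ X₂, ∀ p ∈ P, p ∈ A₂ \ (S₂ ∪ T₂) :=
    fun P hP p hp => (hX₂cov p).2 ⟨P, hP, hp⟩
  have sub1 : ∀ P ∈ X₁, dpVerts P ⊆ arcVerts A₁ := by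
    rintro P hP v ⟨q, hq, hvq⟩
    exact ⟨q, (hmem₁ P hP q hq).1, hvq⟩
  have sub2 : ∀ P ∈ X₂, dpVerts P ⊆ arcVerts A₂ := by
    rintro P hP v ⟨q, hq, hvq⟩
    exact ⟨q, (hmem₂ P hP q hq).1, hvq⟩
  -- a 2-path from a side whose vertex set meets {s,t} in both s and t forces c = 2
  have key₁ : ∀ P ∈ X₁, s ∈ dpVerts P → t ∈ dpVerts P → c₁ = 2 := by
    intro P hP hs ht
    exact hpath₁.1 ⟨P, hP, two_path_st h₁ (hX₁p P hP)
      (fun q hq => (hmem₁ P hP q hq).1) hs ht⟩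
  have key₂ : ∀ P ∈ X₂, s ∈ dpVerts P → t ∈ dpVerts P → c₂ = 2 := by
    intro P hP hs ht
    exact hpath₂.1 ⟨P, hP, two_path_st h₂ (hX₂p P hP)
      (fun q hq => (hmem₂ P hP q hq).1) hs ht⟩
  have hv' : arcVerts A₂ ∩ arcVerts A₁ = {s, t} := by rw [Set.inter_comm]; exact hv
  have hset : (A₁ ∪ A₂) \ ((S₁ ∪ S₂) ∪ (T₁ ∪ T₂)) =
      (A₁ \ (S₁ ∪ T₁)) ∪ (A₂ \ (S₂ ∪ T₂)) := by
    ext p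
    have e1 : p ∈ S₁ → p ∈ A₁ := fun h => (hS₁ h).1
    have e2 : p ∈ T₁ → p ∈ A₁ := fun h => (hT₁ h).1
    have e3 : p ∈ S₂ → p ∈ A₂ := fun h => (hS₂ h).1
    have e4 : p ∈ T₂ → p ∈ A₂ := fun h => (hT₂ h).1
    simp only [Set.mem_diff, Set.mem_union]
    constructor
    · rintro ⟨hA, hn⟩
      rcases hA with hA | hA
      · exact Or.inl ⟨hA, fun hx => hn (hx.imp Or.inl Or.inl)⟩
      · exact Or.inr ⟨hA, fun hx => hn (hx.imp Or.inr Or.inr)⟩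
    · rintro (⟨hA, hn⟩ | ⟨hA, hn⟩)
      · refine ⟨Or.inl hA, ?_⟩
        rintro ((h | h) | (h | h))
        · exact hn (Or.inl h)
        · exact hdis hA (e3 h)
        · exact hn (Or.inr h)
        · exact hdis hA (e4 h)
      · refine ⟨Or.inr hA, ?_⟩
        rintro ((h | h) | (h | h))
        · exact hdis (e1 h) hA
        · exact hn (Or.inl h)
        · exact hdis (e2 h) hA
        · exact hn (Or.inr h)
  refine ⟨?_, ?_, ?_, ?_, ?_, ?_, ?_, ?_, ?_, ?_⟩
  · omega
  · rintro p (h | h)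
    · exact ⟨Or.inl (hS₁ h).1, (hS₁ h).2⟩
    · exact ⟨Or.inr (hS₂ h).1, (hS₂ h).2⟩
  · rintro p (h | h)
    · exact ⟨Or.inl (hT₁ h).1, (hT₁ h).2⟩
    · exact ⟨Or.inr (hT₂ h).1, (hT₂ h).2⟩
  · rw [hset]
    refine ⟨?_, ?_, ?_, ?_⟩
    · rintro P (hP | hP)
      · exact hX₁p P hP
      · exact hX₂p P hP
    · intro p
      constructor
      · rintro (h | h)
        · obtain ⟨P, hP, hp⟩ := (hX₁cov p).1 h
          exact ⟨P, Or.inl hP, hp⟩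
        · obtain ⟨P, hP, hp⟩ := (hX₂cov p).1 h
          exact ⟨P, Or.inr hP, hp⟩
      · rintro ⟨P, hP | hP, hp⟩
        · exact Or.inl ((hX₁cov p).2 ⟨P, hP, hp⟩)
        · exact Or.inr ((hX₂cov p).2 ⟨P, hP, hp⟩)
    · rintro P (hP | hP) Q (hQ | hQ) hne p hp hq
      · exact hX₁dis P hP Q hQ hne p hp hq
      · exact hdis (hmem₁ P hP p hp).1 (hmem₂ Q hQ p hq).1
      · exact hdis (hmem₁ Q hQ p hq).1 (hmem₂ P hP p hp).1
      · exact hX₂dis P hP Q hQ hne p hp hq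
    · rintro P (hP | hP) Q (hQ | hQ) hne ⟨u, v, huv, huP, huQ, hvP, hvQ⟩
      · exact hX₁conf P hP Q hQ hne ⟨u, v, huv, huP, huQ, hvP, hvQ⟩
      · -- P ∈ X₁, Q ∈ X₂
        have hu : u ∈ ({s, t} : Set V) := hv ▸ ⟨sub1 P hP huP, sub2 Q hQ huQ⟩
        have hvv : v ∈ ({s, t} : Set V) := hv ▸ ⟨sub1 P hP hvP, sub2 Q hQ hvQ⟩
        have hstP : s ∈ dpVerts P ∧ t ∈ dpVerts P ∧ s ∈ dpVerts Q ∧ t ∈ dpVerts Q := by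
          rcases hu with hu | hu <;> rcases hvv with hv1 | hv1 <;>
            first
            | exact absurd (hu.trans hv1.symm) huv
            | exact ⟨hu ▸ huP, hv1 ▸ hvP, hu ▸ huQ, hv1 ▸ hvQ⟩
            | exact ⟨hv1 ▸ hvP, hu ▸ huP, hv1 ▸ hvQ, hu ▸ huQ⟩
        have := key₁ P hP hstP.1 hstP.2.1
        have := key₂ Q hQ hstP.2.2.1 hstP.2.2.2
        omega
      · have hu : u ∈ ({s, t} : Set V) := hv ▸ ⟨sub1 Q hQ huQ, sub2 P hP huP⟩
        have hvv : v ∈ ({s, t} : Set V) := hv ▸ ⟨sub1 Q hQ hvQ, sub2 P hP hvP⟩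
        have hstP : s ∈ dpVerts P ∧ t ∈ dpVerts P ∧ s ∈ dpVerts Q ∧ t ∈ dpVerts Q := by
          rcases hu with hu | hu <;> rcases hvv with hv1 | hv1 <;>
            first
            | exact absurd (hu.trans hv1.symm) huv
            | exact ⟨hu ▸ huP, hv1 ▸ hvP, hu ▸ huQ, hv1 ▸ hvQ⟩
            | exact ⟨hv1 ▸ hvP, hu ▸ huP, hv1 ▸ hvQ, hu ▸ huQ⟩
        have := key₁ Q hQ hstP.2.2.1 hstP.2.2.2
        have := key₂ P hP hstP.1 hstP.2.1
        omega
      · exact hX₂conf P hP Q hQ hne ⟨u, v, huv, huP, huQ, hvP, hvQ⟩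
  · have hf₁ : S₁.Finite := h₁.finite.subset fun p hp => (hS₁ hp).1
    have hf₂ : S₂.Finite := h₂.finite.subset fun p hp => (hS₂ hp).1
    rw [Set.ncard_union_eq (hd.mono (fun p hp => (hS₁ hp).1) (fun p hp => (hS₂ hp).1))
      hf₁ hf₂, ha₁, ha₂]
  · have hf₁ : T₁.Finite := h₁.finite.subset fun p hp => (hT₁ hp).1
    have hf₂ : T₂.Finite := h₂.finite.subset fun p hp => (hT₂ hp).1
    rw [Set.ncard_union_eq (hd.mono (fun p hp => (hT₁ hp).1) (fun p hp => (hT₂ hp).1))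
      hf₁ hf₂, hb₁, hb₂]
  · rintro p hp ⟨P, hP | hP, hpath⟩
    · -- P ∈ X₁
      rcases hp with (hp | hp) | (hp | hp)
      · exact hnp₁ p (Or.inl hp) ⟨P, hP, hpath⟩
      · -- p ∈ S₂, P ∈ X₁
        obtain ⟨w, hw⟩ := hpath
        have ha : (p.1, w) ∈ A₁ := (hmem₁ P hP _ (by rw [hw]; simp)).1
        have hb : (w, p.2) ∈ A₁ := (hmem₁ P hP _ (by rw [hw]; simp)).1
        have hpq : p = (s, t) := cross_st h₂ h₁ hv' (hS₂ hp).1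
          ⟨_, ha, Or.inl rfl⟩ ⟨_, hb, Or.inr rfl⟩
        have hcc₂ : c₂ = 1 := hst₂.1 (hpq ▸ (hS₂ hp).1)
        have hcc₁ : c₁ = 2 := hpath₁.1 ⟨P, hP, w, by rw [hw, hpq]⟩
        omega
      · exact hnp₁ p (Or.inr hp) ⟨P, hP, hpath⟩
      · obtain ⟨w, hw⟩ := hpath
        have ha : (p.1, w) ∈ A₁ := (hmem₁ P hP _ (by rw [hw]; simp)).1
        have hb : (w, p.2) ∈ A₁ := (hmem₁ P hP _ (by rw [hw]; simp)).1
        have hpq : p = (s, t) := cross_st h₂ h₁ hv' (hT₂ hp).1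
          ⟨_, ha, Or.inl rfl⟩ ⟨_, hb, Or.inr rfl⟩
        have hcc₂ : c₂ = 1 := hst₂.1 (hpq ▸ (hT₂ hp).1)
        have hcc₁ : c₁ = 2 := hpath₁.1 ⟨P, hP, w, by rw [hw, hpq]⟩
        omega
    · -- P ∈ X₂
      rcases hp with (hp | hp) | (hp | hp)
      · obtain ⟨w, hw⟩ := hpath
        have ha : (p.1, w) ∈ A₂ := (hmem₂ P hP _ (by rw [hw]; simp)).1
        have hb : (w, p.2) ∈ A₂ := (hmem₂ P hP _ (by rw [hw]; simp)).1
        have hpq : p = (s, t) := cross_st h₁ h₂ hv (hS₁ hp).1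
          ⟨_, ha, Or.inl rfl⟩ ⟨_, hb, Or.inr rfl⟩
        have hcc₁ : c₁ = 1 := hst₁.1 (hpq ▸ (hS₁ hp).1)
        have hcc₂ : c₂ = 2 := hpath₂.1 ⟨P, hP, w, by rw [hw, hpq]⟩
        omega
      · exact hnp₂ p (Or.inl hp) ⟨P, hP, hpath⟩
      · obtain ⟨w, hw⟩ := hpath
        have ha : (p.1, w) ∈ A₂ := (hmem₂ P hP _ (by rw [hw]; simp)).1
        have hb : (w, p.2) ∈ A₂ := (hmem₂ P hP _ (by rw [hw]; simp)).1
        have hpq : p = (s, t) := cross_st h₁ h₂ hv (hT₁ hp).1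
          ⟨_, ha, Or.inl rfl⟩ ⟨_, hb, Or.inr rfl⟩
        have hcc₁ : c₁ = 1 := hst₁.1 (hpq ▸ (hT₁ hp).1)
        have hcc₂ : c₂ = 2 := hpath₂.1 ⟨P, hP, w, by rw [hw, hpq]⟩
        omega
      · exact hnp₂ p (Or.inr hp) ⟨P, hP, hpath⟩
  · rw [Set.mem_union, hst₁, hst₂]
    rcases hc with rfl | rfl
    · rw [Nat.zero_max]; omega
    · rw [Nat.max_zero]; omega
  · intro h
    rcases hc with rfl | rfl
    · rw [Nat.zero_max] at h
      obtain ⟨hs, ht⟩ := hSin₂ h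
      exact ⟨Or.inr hs, Or.inr ht⟩
    · rw [Nat.max_zero] at h
      obtain ⟨hs, ht⟩ := hSin₁ h
      exact ⟨Or.inl hs, Or.inl ht⟩
  · constructor
    · rintro ⟨P, hP | hP, h⟩
      · have := hpath₁.1 ⟨P, hP, h⟩; omega
      · have := hpath₂.1 ⟨P, hP, h⟩; omega
    · intro h
      rcases hc with rfl | rfl
      · rw [Nat.zero_max] at h
        obtain ⟨P, hP, hh⟩ := hpath₂.2 h
        exact ⟨P, Or.inr hP, hh⟩
      · rw [Nat.max_zero] at h
        obtain ⟨P, hP, hh⟩ := hpath₁.2 h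
        exact ⟨P, Or.inl hP, hh⟩
end
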